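/- arXiv:math/0501066 — 2 statements merged into one kernel-verified Lean document; each statement's English description precedes it below -/
import Mathlib

section
/- Define h : (0,∞) → ℝ by h(x) = −3/(2x²) + 2^{−1/2}·(3·coth(2^{1/4}·x)² − 2), where coth(y) = cosh(y)/sinh(y). Then h(x) > 0 for every x > 0, and there exists a finite constant C > 0 such that h(x) ≤ C·x² for every x > 0. -/
/-!
Since `coth² = 1 + 1 / sinh²`, the substitution `y = 2^{1/4} x` gives `h(x) = 2^{-1/2} g(y)` with
`g(y) = 1 + 3 / sinh² y - 3 / y²`. Clearing denominators, `g(y) > 0` amounts to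
`sinh² y · (3 - y²) < 3 y²` when `y² < 3` (it is clear otherwise), and `g(y) ≤ y²` is clear for
`y ≥ 1` because `sinh y ≥ y`. The remaining cases follow from the degree-five Taylor bounds for
`sinh` and `cosh` on `[0, 1]`; for `y < √3` one first writes `sinh y = 2 sinh (y/2) cosh (y/2)`
to stay in that range.
-/

/-- `coth y = cosh y / sinh y`. -/
noncomputable def coth (y : ℝ) : ℝ := Real.cosh y / Real.sinh y

/-- The function `h(x) = −3/(2x²) + 2^{−1/2}·(3·coth(2^{1/4}·x)² − 2)`. -/
noncomputable def hfun (x : ℝ) : ℝ :=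
  -3 / (2 * x ^ 2) +
    (2 : ℝ) ^ (-(1 : ℝ) / 2) * (3 * coth ((2 : ℝ) ^ ((1 : ℝ) / 4) * x) ^ 2 - 2)

open Real

lemma abs_exp_sub_taylor_le {x : ℝ} (hx : |x| ≤ 1) :
    |exp x - (1 + x + x ^ 2 / 2 + x ^ 3 / 6 + x ^ 4 / 24 + x ^ 5 / 120)| ≤ |x| ^ 6 * (7 / 4320) := by
  have h := Real.exp_bound hx (n := 6) (by norm_num)
  simp only [Finset.sum_range_succ, Finset.sum_range_zero] at h
  norm_num [Nat.factorial] at h ⊢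
  convert h using 2

lemma abs_exp_pm_sub_taylor_le {t : ℝ} (h0 : 0 ≤ t) (h1 : t ≤ 1) :
    |exp t - (1 + t + t ^ 2 / 2 + t ^ 3 / 6 + t ^ 4 / 24 + t ^ 5 / 120)| ≤ t ^ 6 * (7 / 4320) ∧
    |exp (-t) - (1 - t + t ^ 2 / 2 - t ^ 3 / 6 + t ^ 4 / 24 - t ^ 5 / 120)| ≤ t ^ 6 * (7 / 4320) := by
  have ht : |t| = t := abs_of_nonneg h0
  constructor
  · simpa [ht] using abs_exp_sub_taylor_le (x := t) (by rwa [ht])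
  · have := abs_exp_sub_taylor_le (x := -t) (by rwa [abs_neg, ht])
    rw [abs_neg, ht] at this
    convert this using 3; ring

lemma sinh_le_taylor {t : ℝ} (h0 : 0 ≤ t) (h1 : t ≤ 1) :
    sinh t ≤ t + t ^ 3 / 6 + t ^ 5 / 60 := by
  obtain ⟨hp, hn⟩ := abs_exp_pm_sub_taylor_le h0 h1
  rw [abs_le] at hp hn
  have : t ^ 6 ≤ t ^ 5 := pow_le_pow_of_le_one h0 h1 (by norm_num)
  rw [sinh_eq]
  linarith [hp.2, hn.1]

lemma taylor_le_sinh {t : ℝ} (h0 : 0 ≤ t) (h1 : t ≤ 1) :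
    t + t ^ 3 / 6 ≤ sinh t := by
  obtain ⟨hp, hn⟩ := abs_exp_pm_sub_taylor_le h0 h1
  rw [abs_le] at hp hn
  have : t ^ 6 ≤ t ^ 5 := pow_le_pow_of_le_one h0 h1 (by norm_num)
  rw [sinh_eq]
  linarith [hp.1, hn.2]

lemma cosh_le_taylor {t : ℝ} (h0 : 0 ≤ t) (h1 : t ≤ 1) :
    cosh t ≤ 1 + t ^ 2 / 2 + t ^ 4 / 20 := by
  obtain ⟨hp, hn⟩ := abs_exp_pm_sub_taylor_le h0 h1
  rw [abs_le] at hp hn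
  have : t ^ 6 ≤ t ^ 4 := pow_le_pow_of_le_one h0 h1 (by norm_num)
  rw [cosh_eq]
  linarith [hp.2, hn.2]

lemma sinh_sq_mul_three_sub_sq_lt {y : ℝ} (hy : 0 < y) (hy3 : y ^ 2 < 3) :
    sinh y ^ 2 * (3 - y ^ 2) < 3 * y ^ 2 := by
  obtain ⟨t, rfl⟩ : ∃ t, y = 2 * t := ⟨y / 2, by ring⟩
  have ht0 : 0 < t := by linarith
  have ht1 : t ≤ 1 := by nlinarith
  set S := t + t ^ 3 / 6 + t ^ 5 / 60
  set K := 1 + t ^ 2 / 2 + t ^ 4 / 20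
  have hsinh : sinh (2 * t) ≤ 2 * S * K := by
    rw [sinh_two_mul, mul_assoc, mul_assoc]
    gcongr
    · exact sinh_le_taylor ht0.le ht1
    · exact cosh_le_taylor ht0.le ht1
  have hsq : sinh (2 * t) ^ 2 ≤ (2 * S * K) ^ 2 :=
    pow_le_pow_left₀ (sinh_nonneg_iff.mpr hy.le) hsinh 2
  have hmargin : 0 < 12 * t ^ 2 - (3 - 4 * t ^ 2) * (2 * S * K) ^ 2 := by
    have : 12 * t ^ 2 - (3 - 4 * t ^ 2) * (2 * S * K) ^ 2 = t ^ 6 * (62 / 5 + 82 / 9 * t ^ 2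
        + 953 / 300 * t ^ 4 + 301 / 450 * t ^ 6 + 823 / 9000 * t ^ 8 + 73 / 9000 * t ^ 10
        + 157 / 360000 * t ^ 12 + 1 / 90000 * t ^ 14) := by ring
    rw [this]
    positivity
  nlinarith [mul_le_mul_of_nonneg_right hsq (by linarith : (0:ℝ) ≤ 3 - (2 * t) ^ 2)]

noncomputable def hfunNormalized (y : ℝ) : ℝ := 1 + 3 / sinh y ^ 2 - 3 / y ^ 2

lemma hfunNormalized_eq_div {y : ℝ} (hy : 0 < y) :
    hfunNormalized y = (y ^ 2 * sinh y ^ 2 + 3 * y ^ 2 - 3 * sinh y ^ 2) / (y ^ 2 * sinh y ^ 2) := by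
  have : 0 < sinh y := sinh_pos_iff.mpr hy
  rw [hfunNormalized]
  field_simp

lemma hfunNormalized_pos {y : ℝ} (hy : 0 < y) : 0 < hfunNormalized y := by
  have hs : 0 < sinh y := sinh_pos_iff.mpr hy
  rw [hfunNormalized_eq_div hy]
  refine div_pos ?_ (by positivity)
  rcases lt_or_ge (y ^ 2) 3 with h3 | h3
  · nlinarith [sinh_sq_mul_three_sub_sq_lt hy h3]
  · nlinarith [sq_nonneg (sinh y), sq_nonneg y]

lemma hfunNormalized_le_sq {y : ℝ} (hy : 0 < y) : hfunNormalized y ≤ y ^ 2 := by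
  have hs : 0 < sinh y := sinh_pos_iff.mpr hy
  rcases le_or_gt y 1 with h1 | h1
  · rw [hfunNormalized_eq_div hy, div_le_iff₀ (by positivity)]
    have hsqL : (y + y ^ 3 / 6) ^ 2 ≤ sinh y ^ 2 :=
      pow_le_pow_left₀ (by positivity) (taylor_le_sinh hy.le h1) 2
    have hsqU : sinh y ^ 2 ≤ (y + y ^ 3 / 6 + y ^ 5 / 60) ^ 2 :=
      pow_le_pow_left₀ hs.le (sinh_le_taylor hy.le h1) 2
    have h12 : y ^ 12 ≤ y ^ 6 := pow_le_pow_of_le_one hy.le h1 (by norm_num)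
    nlinarith [pow_pos hy 6, pow_pos hy 8, pow_pos hy 10]
  · have : 3 / sinh y ^ 2 ≤ 3 / y ^ 2 := by
      gcongr
      exact (self_lt_sinh_iff.mpr hy).le
    rw [hfunNormalized]
    nlinarith

lemma two_rpow_neg_half_mul_sq_two_rpow_quarter :
    (2 : ℝ) ^ (-(1 : ℝ) / 2) * ((2 : ℝ) ^ ((1 : ℝ) / 4)) ^ 2 = 1 := by
  rw [← rpow_natCast, ← rpow_mul zero_le_two, ← rpow_add zero_lt_two]
  norm_num

lemma coth_sq {y : ℝ} (hy : y ≠ 0) : coth y ^ 2 = 1 + 1 / sinh y ^ 2 := by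
  have : sinh y ≠ 0 := sinh_ne_zero.mpr hy
  rw [coth, div_pow, cosh_sq]
  field_simp

lemma hfun_eq_hfunNormalized {x : ℝ} (hx : x ≠ 0) :
    hfun x = (2 : ℝ) ^ (-(1 : ℝ) / 2) * hfunNormalized ((2 : ℝ) ^ ((1 : ℝ) / 4) * x) := by
  have hc := two_rpow_neg_half_mul_sq_two_rpow_quarter
  have hc2 : ((2 : ℝ) ^ (-(1 : ℝ) / 2)) ^ 2 * 2 = 1 := by
    rw [← rpow_natCast, ← rpow_mul zero_le_two]
    norm_num
  have ha : (2 : ℝ) ^ ((1 : ℝ) / 4) ≠ 0 := by positivity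
  rw [hfun, hfunNormalized, coth_sq (by positivity)]
  generalize (2 : ℝ) ^ ((1 : ℝ) / 4) = a at *
  generalize (2 : ℝ) ^ (-(1 : ℝ) / 2) = c at *
  field_simp
  linear_combination (3 * sinh (x * a) ^ 2 * a ^ 2) * hc2 - (6 * c * sinh (x * a) ^ 2) * hc

/-- `h(x) > 0` for every `x > 0`, and there is a finite constant `C > 0` with
`h(x) ≤ C·x²` for every `x > 0`. -/
theorem stmt0 :
    (∀ x : ℝ, 0 < x → 0 < hfun x) ∧
      ∃ C : ℝ, 0 < C ∧ ∀ x : ℝ, 0 < x → hfun x ≤ C * x ^ 2 := by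
  refine ⟨fun x hx => ?_, 1, one_pos, fun x hx => ?_⟩
  · rw [hfun_eq_hfunNormalized hx.ne']
    exact mul_pos (by positivity) (hfunNormalized_pos (by positivity))
  · calc hfun x
        = (2 : ℝ) ^ (-(1 : ℝ) / 2) * hfunNormalized ((2 : ℝ) ^ ((1 : ℝ) / 4) * x) :=
          hfun_eq_hfunNormalized hx.ne'
      _ ≤ (2 : ℝ) ^ (-(1 : ℝ) / 2) * ((2 : ℝ) ^ ((1 : ℝ) / 4) * x) ^ 2 := by
          gcongr
          exact hfunNormalized_le_sq (by positivity)
      _ = 1 * x ^ 2 := by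
          rw [mul_pow, ← mul_assoc, two_rpow_neg_half_mul_sq_two_rpow_quarter]
end

section
/- Let σ > 0 and let ζ : [0,σ] → [0,∞) be continuous with ζ(0) = ζ(σ) = 0. For s, r ∈ [0,σ] set s ⊕ r = s + r if s + r ≤ σ and s ⊕ r = s + r − σ otherwise, and for real u, v write [u,v] for the closed interval [min(u,v), max(u,v)]. Define ζ^{[s]}(r) = ζ(s) + ζ(s ⊕ r) − 2·min_{u ∈ [s, s⊕r]} ζ(u) for r ∈ [0,σ]. Then for every s, r, r' ∈ [0,σ]: min_{u ∈ [r, r']} ζ^{[s]}(u) = min_{u ∈ [s⊕r, s⊕r']} ζ(u) − min_{u ∈ [s⊕r, s]} ζ(u) − min_{u ∈ [s⊕r', s]} ζ(u) + ζ(s). -/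
/-!
Write `m(x, y)` for the minimum of `ζ` on `[x, y]` and `d(s, v) = ζ s + ζ v - 2 m(s, v)`, so that
`ζ^{[s]}(r) = d(s, s ⊕ r)`. For an interval `[a, b]` with `s` not in its interior,
`min_{v ∈ [a, b]} d(s, v) = ζ s + m(a, b) - m(s, a) - m(s, b)`: the lower bound comes from splitting
`m(s, b)` at `v`; the minimum is attained at a minimiser of `ζ` on `[a, b]` if `m(s, a) ≤ m(a, b)`,
and otherwise at the first point after `a` where `ζ` reaches the level `m(s, a)`.
If `s ⊕ ·` is a translation on `[r, r']`, this is the claim. Otherwise split `[r, r']` at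
`σ - s`: the two pieces map onto `[s ⊕ r, σ]` and `[0, s ⊕ r']`, where `ζ(0) = ζ(σ) = 0` makes the
outer minima vanish, and the minimum of the two values is the right-hand side.
-/

open Set

section
variable {ζ : ℝ → ℝ} {s v a b c w x y z : ℝ}

theorem isLeast_sInf_image_Icc (hxy : x ≤ y) (hc : ContinuousOn ζ (Icc x y)) :
    IsLeast (ζ '' Icc x y) (sInf (ζ '' Icc x y)) :=
  (isCompact_Icc.image_of_continuousOn hc).isLeast_sInf ((nonempty_Icc.2 hxy).image ζ)

theorem sInf_image_Icc_le (hc : ContinuousOn ζ (Icc x y)) (hz : z ∈ Icc x y) :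
    sInf (ζ '' Icc x y) ≤ ζ z :=
  (isLeast_sInf_image_Icc (hz.1.trans hz.2) hc).2 (mem_image_of_mem ζ hz)

theorem sInf_image_Icc_eq_min (hxy : x ≤ y) (hyz : y ≤ z) (hc : ContinuousOn ζ (Icc x z)) :
    sInf (ζ '' Icc x z) = min (sInf (ζ '' Icc x y)) (sInf (ζ '' Icc y z)) := by
  have hl := isLeast_sInf_image_Icc hxy (hc.mono (Icc_subset_Icc_right hyz))
  have hr := isLeast_sInf_image_Icc hyz (hc.mono (Icc_subset_Icc_left hxy))
  rw [← Icc_union_Icc_eq_Icc hxy hyz, image_union, (hl.union hr).csInf_eq]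

theorem sInf_image_eq_zero {A : Set ℝ} (h0 : ∀ x ∈ A, 0 ≤ ζ x) (hx : x ∈ A) (hζx : ζ x = 0) :
    sInf (ζ '' A) = 0 :=
  IsLeast.csInf_eq ⟨⟨x, hx, hζx⟩, by rintro _ ⟨y, hy, rfl⟩; exact h0 y hy⟩

theorem sInf_comp_neg_image_Icc (x y : ℝ) :
    sInf ((fun t => ζ (-t)) '' Icc x y) = sInf (ζ '' Icc (-y) (-x)) := by
  rw [← image_neg_Icc, image_image]

theorem ContinuousOn.exists_first_eq (hc : ContinuousOn ζ (Icc a w)) (haw : a ≤ w)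
    (hw : ζ w ≤ c) (ha : c ≤ ζ a) :
    ∃ v ∈ Icc a w, ζ v = c ∧ ∀ x ∈ Icc a v, c ≤ ζ x := by
  set S := Icc a w ∩ ζ ⁻¹' Iic c
  have hSbdd : BddBelow S := ⟨a, fun _ hx => hx.1.1⟩
  have hvS : sInf S ∈ S :=
    (hc.preimage_isClosed_of_isClosed isClosed_Icc isClosed_Iic).csInf_mem
      ⟨w, ⟨⟨haw, le_rfl⟩, hw⟩⟩ hSbdd
  have hfirst : ∀ x ∈ Icc a (sInf S), ζ x ≤ c → x = sInf S := fun x hx hxc =>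
    le_antisymm hx.2 (csInf_le hSbdd ⟨⟨hx.1, hx.2.trans hvS.1.2⟩, hxc⟩)
  obtain ⟨x, hx, hζx⟩ :=
    intermediate_value_Icc' hvS.1.1 (hc.mono (Icc_subset_Icc_right hvS.1.2)) ⟨hvS.2, ha⟩
  have hζv : ζ (sInf S) = c := hfirst x hx hζx.le ▸ hζx
  refine ⟨sInf S, hvS.1, hζv, fun y hy => le_of_not_gt fun hlt => ?_⟩
  exact hlt.ne (hfirst y hy hlt.le ▸ hζv)

/-- The pseudo-distance `d_ζ(s, v)` of the real tree coded by `ζ`. -/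
noncomputable def treeDist (ζ : ℝ → ℝ) (s v : ℝ) : ℝ := ζ s + ζ v - 2 * sInf (ζ '' uIcc s v)

theorem treeDist_of_eq_zero (h0 : ∀ x ∈ uIcc s v, 0 ≤ ζ x) (hv : ζ v = 0) :
    treeDist ζ s v = ζ s := by
  rw [treeDist, sInf_image_eq_zero h0 right_mem_uIcc hv, hv]
  ring

theorem treeDist_comp_neg (s v : ℝ) : treeDist (fun t => ζ (-t)) (-s) (-v) = treeDist ζ s v := by
  simp only [treeDist, neg_neg]
  rw [← image_neg_uIcc, image_image]
  simp only [neg_neg]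

theorem isLeast_treeDist_image_Icc_of_le (hsa : s ≤ a) (hab : a ≤ b)
    (hc : ContinuousOn ζ (Icc s b)) :
    IsLeast (treeDist ζ s '' Icc a b)
      (ζ s + sInf (ζ '' Icc a b) - sInf (ζ '' Icc s a) - sInf (ζ '' Icc s b)) := by
  have hdist : ∀ v ∈ Icc a b, treeDist ζ s v = ζ s + ζ v - 2 * sInf (ζ '' Icc s v) :=
    fun v hv => by rw [treeDist, uIcc_of_le (hsa.trans hv.1)]
  have hsplit : ∀ {x y z}, s ≤ x → x ≤ y → y ≤ z → z ≤ b →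
      sInf (ζ '' Icc x z) = min (sInf (ζ '' Icc x y)) (sInf (ζ '' Icc y z)) :=
    fun h₁ h₂ h₃ h₄ => sInf_image_Icc_eq_min h₂ h₃ (hc.mono (Icc_subset_Icc h₁ h₄))
  have hle : ∀ {x y z}, s ≤ x → y ≤ b → z ∈ Icc x y → sInf (ζ '' Icc x y) ≤ ζ z :=
    fun h₁ h₂ hz => sInf_image_Icc_le (hc.mono (Icc_subset_Icc h₁ h₂)) hz
  have hsb := hsplit le_rfl hsa hab le_rfl
  refine ⟨?_, ?_⟩
  · obtain ⟨⟨w, hw, hζw⟩, -⟩ := isLeast_sInf_image_Icc hab (hc.mono (Icc_subset_Icc_left hsa))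
    rcases le_or_gt (sInf (ζ '' Icc s a)) (sInf (ζ '' Icc a b)) with hab_le | hab_lt
    · have haw : sInf (ζ '' Icc a b) ≤ sInf (ζ '' Icc a w) :=
        (hsplit hsa hw.1 hw.2 le_rfl).trans_le (min_le_left _ _)
      refine ⟨w, hw, ?_⟩
      rw [hdist w hw, hsplit le_rfl hsa hw.1 hw.2, min_eq_left (hab_le.trans haw), hζw, hsb,
        min_eq_left hab_le]
      ring
    -- `ζ` dips below `m(s, a)` on `[a, b]`; at its first passage `v` to that level,
    -- `m(s, v) = m(s, a)`.
    · obtain ⟨v, hv, hζv, hge⟩ := (hc.mono (Icc_subset_Icc hsa hw.2)).exists_first_eq hw.1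
        (hζw ▸ hab_lt.le) (hle le_rfl hab ⟨hsa, le_rfl⟩)
      have hvb : v ≤ b := hv.2.trans hw.2
      have hav : sInf (ζ '' Icc s a) ≤ sInf (ζ '' Icc a v) := by
        obtain ⟨⟨x, hx, hζx⟩, -⟩ := isLeast_sInf_image_Icc hv.1 (hc.mono (Icc_subset_Icc hsa hvb))
        exact hζx ▸ hge x hx
      refine ⟨v, ⟨hv.1, hvb⟩, ?_⟩
      rw [hdist v ⟨hv.1, hvb⟩, hsplit le_rfl hsa hv.1 hvb, min_eq_left hav, hζv, hsb,
        min_eq_right hab_lt.le]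
      ring
  · rintro _ ⟨v, hv, rfl⟩
    have hsv : sInf (ζ '' Icc s v) ≤ sInf (ζ '' Icc s a) :=
      (hsplit le_rfl hsa hv.1 hv.2).trans_le (min_le_left _ _)
    have hvb : sInf (ζ '' Icc a b) ≤ sInf (ζ '' Icc v b) :=
      (hsplit hsa hv.1 hv.2 le_rfl).trans_le (min_le_right _ _)
    have h₁ := hle hsa le_rfl hv
    have h₂ := hle le_rfl hv.2 ⟨hsa.trans hv.1, le_rfl⟩
    rw [hdist v hv, hsplit le_rfl (hsa.trans hv.1) hv.2 le_rfl]
    rcases min_cases (sInf (ζ '' Icc s v)) (sInf (ζ '' Icc v b)) with ⟨h, -⟩ | ⟨h, -⟩ <;>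
      rw [h] <;> linarith

theorem isLeast_treeDist_image_Icc_of_ge (hab : a ≤ b) (hbs : b ≤ s)
    (hc : ContinuousOn ζ (Icc a s)) :
    IsLeast (treeDist ζ s '' Icc a b)
      (ζ s + sInf (ζ '' Icc a b) - sInf (ζ '' Icc a s) - sInf (ζ '' Icc b s)) := by
  have hc' : ContinuousOn (fun t => ζ (-t)) (Icc (-s) (-a)) :=
    hc.comp continuousOn_neg fun t ht => ⟨le_neg.2 ht.2, neg_le.1 ht.1⟩
  have h := isLeast_treeDist_image_Icc_of_le (neg_le_neg hbs) (neg_le_neg hab) hc'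
  simp only [sInf_comp_neg_image_Icc, neg_neg] at h
  rw [← image_neg_Icc, image_image] at h
  simp only [treeDist_comp_neg] at h
  convert h using 1
  ring

/-- `s ⊕ r`. -/
noncomputable def circAdd (σ s r : ℝ) : ℝ := if s + r ≤ σ then s + r else s + r - σ

/-- The lifetime process `ζ^{[s]}` of the snake re-rooted at `s`. -/
noncomputable def reroot (σ : ℝ) (ζ : ℝ → ℝ) (s r : ℝ) : ℝ := treeDist ζ s (circAdd σ s r)

variable {σ r r' : ℝ}

theorem circAdd_of_le (h : s + r ≤ σ) : circAdd σ s r = s + r := if_pos h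

theorem circAdd_of_lt (h : σ < s + r) : circAdd σ s r = s + r - σ := if_neg h.not_ge

theorem reroot_eq_of_le_add (h : σ ≤ s + r) (hs : s ∈ Icc 0 σ) (h0 : ∀ u ∈ Icc 0 σ, 0 ≤ ζ u)
    (hζ0 : ζ 0 = 0) (hζσ : ζ σ = 0) : reroot σ ζ s r = treeDist ζ s (s - σ + r) := by
  rcases h.lt_or_eq with h | h
  · rw [reroot, circAdd_of_lt h, sub_add_eq_add_sub]
  · have hσ : σ ∈ Icc 0 σ := ⟨hs.1.trans hs.2, le_rfl⟩
    rw [reroot, circAdd_of_le h.ge, ← h, show s - σ + r = 0 by linarith,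
      treeDist_of_eq_zero (fun x hx => h0 x (uIcc_subset_Icc hs hσ hx)) hζσ,
      treeDist_of_eq_zero (fun x hx => h0 x (uIcc_subset_Icc hs ⟨le_rfl, hσ.1⟩ hx)) hζ0]

theorem sInf_reroot_image_Icc_of_add_le (hζ : ContinuousOn ζ (Icc 0 σ)) (hs : 0 ≤ s)
    (hr : 0 ≤ r) (hrr' : r ≤ r') (hr' : s + r' ≤ σ) :
    sInf (reroot σ ζ s '' Icc r r')
      = sInf (ζ '' uIcc (circAdd σ s r) (circAdd σ s r'))
        - sInf (ζ '' uIcc (circAdd σ s r) s) - sInf (ζ '' uIcc (circAdd σ s r') s) + ζ s := by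
  have himg : reroot σ ζ s '' Icc r r' = treeDist ζ s '' Icc (s + r) (s + r') := by
    rw [← image_const_add_Icc, image_image]
    exact image_congr fun u hu => by rw [reroot, circAdd_of_le (by linarith [hu.2])]
  rw [himg, (isLeast_treeDist_image_Icc_of_le (by linarith) (by linarith)
      (hζ.mono (Icc_subset_Icc hs hr'))).csInf_eq, circAdd_of_le (by linarith), circAdd_of_le hr',
    uIcc_of_le (by linarith), uIcc_of_ge (by linarith), uIcc_of_ge (by linarith)]
  ring

theorem sInf_reroot_image_Icc_of_lt_add (hζ : ContinuousOn ζ (Icc 0 σ)) (hs : s ≤ σ)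
    (hr : σ < s + r) (hrr' : r ≤ r') (hr' : r' ≤ σ) :
    sInf (reroot σ ζ s '' Icc r r')
      = sInf (ζ '' uIcc (circAdd σ s r) (circAdd σ s r'))
        - sInf (ζ '' uIcc (circAdd σ s r) s) - sInf (ζ '' uIcc (circAdd σ s r') s) + ζ s := by
  have himg : reroot σ ζ s '' Icc r r' = treeDist ζ s '' Icc (s + r - σ) (s + r' - σ) := by
    rw [← sub_add_eq_add_sub, ← sub_add_eq_add_sub, ← image_const_add_Icc, image_image]
    exact image_congr fun u hu => by
      rw [reroot, circAdd_of_lt (by linarith [hu.1]), sub_add_eq_add_sub]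
  rw [himg, (isLeast_treeDist_image_Icc_of_ge (by linarith) (by linarith)
      (hζ.mono (Icc_subset_Icc (by linarith) hs))).csInf_eq, circAdd_of_lt hr,
    circAdd_of_lt (by linarith), uIcc_of_le (by linarith), uIcc_of_le (by linarith),
    uIcc_of_le (by linarith)]
  ring

theorem sInf_reroot_image_Icc_of_add_le_of_lt_add (hζ : ContinuousOn ζ (Icc 0 σ))
    (h0 : ∀ u ∈ Icc 0 σ, 0 ≤ ζ u) (hζ0 : ζ 0 = 0) (hζσ : ζ σ = 0) (hs : s ∈ Icc 0 σ)
    (hr : 0 ≤ r) (hrσ : s + r ≤ σ) (hσr' : σ < s + r') (hr' : r' ≤ σ) :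
    sInf (reroot σ ζ s '' Icc r r')
      = sInf (ζ '' uIcc (circAdd σ s r) (circAdd σ s r'))
        - sInf (ζ '' uIcc (circAdd σ s r) s) - sInf (ζ '' uIcc (circAdd σ s r') s) + ζ s := by
  have himg₁ : reroot σ ζ s '' Icc r (σ - s) = treeDist ζ s '' Icc (s + r) σ := by
    have e : Icc (s + r) σ = Icc (s + r) (s + (σ - s)) := by rw [add_sub_cancel]
    rw [e, ← image_const_add_Icc, image_image]
    exact image_congr fun u hu => by rw [reroot, circAdd_of_le (by linarith [hu.2])]
  have himg₂ : reroot σ ζ s '' Icc (σ - s) r' = treeDist ζ s '' Icc 0 (s + r' - σ) := by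
    have e : Icc (0 : ℝ) (s + r' - σ) = Icc (s - σ + (σ - s)) (s - σ + r') := by
      congr 1 <;> ring
    rw [e, ← image_const_add_Icc, image_image]
    exact image_congr fun u hu => reroot_eq_of_le_add (by linarith [hu.1]) hs h0 hζ0 hζσ
  have hzero_left : ∀ x ∈ Icc 0 σ, sInf (ζ '' Icc 0 x) = 0 := fun x hx =>
    sInf_image_eq_zero (fun u hu => h0 u ⟨hu.1, hu.2.trans hx.2⟩) ⟨le_rfl, hx.1⟩ hζ0
  have hzero_right : ∀ x ∈ Icc 0 σ, sInf (ζ '' Icc x σ) = 0 := fun x hx =>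
    sInf_image_eq_zero (fun u hu => h0 u ⟨hx.1.trans hu.1, hu.2⟩) ⟨hx.2, le_rfl⟩ hζσ
  have hleast := (isLeast_treeDist_image_Icc_of_le (a := s + r) (by linarith) hrσ
      (hζ.mono (Icc_subset_Icc hs.1 le_rfl))).union
    (isLeast_treeDist_image_Icc_of_ge (a := 0) (b := s + r' - σ) (by linarith) (by linarith)
      (hζ.mono (Icc_subset_Icc le_rfl hs.2)))
  rw [← Icc_union_Icc_eq_Icc (by linarith) (by linarith : σ - s ≤ r'), image_union, himg₁, himg₂,
    hleast.csInf_eq, hzero_right _ ⟨by linarith, hrσ⟩, hzero_right s hs,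
    hzero_left _ ⟨by linarith, by linarith⟩, hzero_left s hs, circAdd_of_le hrσ,
    circAdd_of_lt hσr', uIcc_of_ge (by linarith), uIcc_of_ge (by linarith),
    uIcc_of_le (by linarith),
    sInf_image_Icc_eq_min (x := s + r' - σ) (y := s) (by linarith) (by linarith)
      (hζ.mono (Icc_subset_Icc (by linarith) hrσ))]
  rw [min_def, min_def]
  split_ifs <;> linarith

end

theorem stmt12_general (σ : ℝ) (ζ : ℝ → ℝ)
    (hζcont : ContinuousOn ζ (Icc 0 σ))
    (hζnonneg : ∀ u ∈ Icc (0 : ℝ) σ, 0 ≤ ζ u)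
    (hζ0 : ζ 0 = 0) (hζσ : ζ σ = 0)
    (oplus : ℝ → ℝ → ℝ)
    (hoplus : ∀ s r : ℝ, oplus s r = if s + r ≤ σ then s + r else s + r - σ)
    (ζre : ℝ → ℝ → ℝ)
    (hζre : ∀ s r : ℝ,
      ζre s r = ζ s + ζ (oplus s r) - 2 * sInf (ζ '' uIcc s (oplus s r))) :
    ∀ s ∈ Icc (0 : ℝ) σ, ∀ r ∈ Icc (0 : ℝ) σ, ∀ r' ∈ Icc (0 : ℝ) σ,
      sInf (ζre s '' uIcc r r')
        = sInf (ζ '' uIcc (oplus s r) (oplus s r'))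
          - sInf (ζ '' uIcc (oplus s r) s)
          - sInf (ζ '' uIcc (oplus s r') s)
          + ζ s := by
  obtain rfl : oplus = circAdd σ := funext₂ hoplus
  obtain rfl : ζre = reroot σ ζ := funext₂ hζre
  intro s hs r hr r' hr'
  wlog hrr' : r ≤ r' generalizing r r'
  · rw [uIcc_comm, this r' hr' r hr (le_of_not_ge hrr'), uIcc_comm (circAdd σ s r) (circAdd σ s r')]
    ring
  rw [uIcc_of_le hrr']
  rcases le_or_gt (s + r') σ with hr'σ | hσr'
  · exact sInf_reroot_image_Icc_of_add_le hζcont hs.1 hr.1 hrr' hr'σ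
  rcases le_or_gt (s + r) σ with hrσ | hσr
  · exact sInf_reroot_image_Icc_of_add_le_of_lt_add hζcont hζnonneg hζ0 hζσ hs hr.1 hrσ hσr' hr'.2
  · exact sInf_reroot_image_Icc_of_lt_add hζcont hs.2 hσr hrr' hr'.2

/-- Let `σ > 0` and let `ζ : [0,σ] → [0,∞)` be continuous with `ζ(0) = ζ(σ) = 0`.
For `s, r ∈ [0,σ]` set `s ⊕ r = s + r` if `s + r ≤ σ` and `s ⊕ r = s + r − σ`
otherwise, and for real `u, v` write `[u,v]` for the closed interval
`[min(u,v), max(u,v)]` (here `Set.uIcc`). Define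
`ζ^{[s]}(r) = ζ(s) + ζ(s ⊕ r) − 2·min_{u ∈ [s, s⊕r]} ζ(u)` for `r ∈ [0,σ]`.
Then for every `s, r, r' ∈ [0,σ]`:
`min_{u ∈ [r,r']} ζ^{[s]}(u) = min_{u ∈ [s⊕r, s⊕r']} ζ(u) − min_{u ∈ [s⊕r, s]} ζ(u)
  − min_{u ∈ [s⊕r', s]} ζ(u) + ζ(s)`, the minima being realized as `sInf` of images. -/
theorem stmt12 (σ : ℝ) (hσ : 0 < σ) (ζ : ℝ → ℝ)
    (hζcont : ContinuousOn ζ (Icc 0 σ))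
    (hζnonneg : ∀ u ∈ Icc (0 : ℝ) σ, 0 ≤ ζ u)
    (hζ0 : ζ 0 = 0) (hζσ : ζ σ = 0)
    (oplus : ℝ → ℝ → ℝ)
    (hoplus : ∀ s r : ℝ, oplus s r = if s + r ≤ σ then s + r else s + r - σ)
    (ζre : ℝ → ℝ → ℝ)
    (hζre : ∀ s r : ℝ,
      ζre s r = ζ s + ζ (oplus s r) - 2 * sInf (ζ '' uIcc s (oplus s r))) :
    ∀ s ∈ Icc (0 : ℝ) σ, ∀ r ∈ Icc (0 : ℝ) σ, ∀ r' ∈ Icc (0 : ℝ) σ,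
      sInf (ζre s '' uIcc r r')
        = sInf (ζ '' uIcc (oplus s r) (oplus s r'))
          - sInf (ζ '' uIcc (oplus s r) s)
          - sInf (ζ '' uIcc (oplus s r') s)
          + ζ s :=
  stmt12_general σ ζ hζcont hζnonneg hζ0 hζσ oplus hoplus ζre hζre
end
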